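/- Let γ = [[A, C],[Cᵀ, A]] be a real symmetric matrix with A symmetric and C antisymmetric, and suppose γ ≥ γ_A ⊕ γ_B for CMs γ_A, γ_B of the same size as A. Then γ ≥ γ̃ ⊕ γ̃ where γ̃ := (γ_A + γ_B)/2 is a CM. -/

import Mathlib

open Matrix
open scoped Classical ComplexOrder

noncomputable section

/-- Embed a real matrix into the complex matrices. -/
def toC {k l : ℕ} (A : Matrix (Fin k) (Fin l) ℝ) : Matrix (Fin k) (Fin l) ℂ :=
  A.map Complex.ofReal

/-- The standard symplectic form `Jₙ = ⊕ₖ [[0,-1],[1,0]]` on `ℝ^{2n}`. -/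
def J (n : ℕ) : Matrix (Fin (2*n)) (Fin (2*n)) ℝ :=
  Matrix.of fun i j =>
    if i.val + 1 = j.val ∧ i.val % 2 = 0 then -1
    else if j.val + 1 = i.val ∧ j.val % 2 = 0 then 1 else 0

/-- A correlation matrix (CM): a real symmetric `2n×2n` matrix with `γ - iJₙ ≥ 0`. -/
def IsCM {n : ℕ} (γ : Matrix (Fin (2*n)) (Fin (2*n)) ℝ) : Prop :=
  γ.IsSymm ∧ (toC γ - Complex.I • toC (J n)).PosSemidef

/-- The operator norm (largest singular value) of a real matrix. -/
def opNorm {n m : ℕ} (C : Matrix (Fin n) (Fin m) ℝ) : ℝ :=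
  ‖(Matrix.toEuclideanLin (𝕜 := ℝ) C).toContinuousLinearMap‖

/-- The square root of a positive semidefinite matrix, as `Matrix.PosSemidef.sqrt` was defined
in the older Mathlib (removed since). -/
def psdSqrt {𝕜 : Type*} [RCLike 𝕜] {k : ℕ} {M : Matrix (Fin k) (Fin k) 𝕜} (hM : M.PosSemidef) :
    Matrix (Fin k) (Fin k) 𝕜 :=
  hM.isHermitian.eigenvectorUnitary.1 * diagonal ((↑) ∘ (√·) ∘ hM.isHermitian.eigenvalues) *
    (star hM.isHermitian.eigenvectorUnitary : Matrix (Fin k) (Fin k) 𝕜)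

/-- The trace norm (sum of singular values) of a real square matrix. -/
def trNorm {k : ℕ} (A : Matrix (Fin k) (Fin k) ℝ) : ℝ :=
  (psdSqrt (Matrix.posSemidef_conjTranspose_mul_self A)).trace

/-- The trace norm of a complex square matrix. -/
def trNormC {k : ℕ} (A : Matrix (Fin k) (Fin k) ℂ) : ℝ :=
  ((psdSqrt (Matrix.posSemidef_conjTranspose_mul_self A)).trace).re

/-- The Moore–Penrose pseudoinverse of a real matrix. -/
def pinvR {n m : ℕ} (A : Matrix (Fin n) (Fin m) ℝ) : Matrix (Fin m) (Fin n) ℝ :=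
  if h : ∃ B : Matrix (Fin m) (Fin n) ℝ,
      A * B * A = A ∧ B * A * B = B ∧ (A * B)ᵀ = A * B ∧ (B * A)ᵀ = B * A
  then h.choose else 0

/-- The Moore–Penrose pseudoinverse of a complex matrix. -/
def pinvC {n m : ℕ} (A : Matrix (Fin n) (Fin m) ℂ) : Matrix (Fin m) (Fin n) ℂ :=
  if h : ∃ B : Matrix (Fin m) (Fin n) ℂ,
      A * B * A = A ∧ B * A * B = B ∧ (A * B)ᴴ = A * B ∧ (B * A)ᴴ = B * A
  then h.choose else 0

/-- Real part of a complex matrix. -/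
def reM {k l : ℕ} (X : Matrix (Fin k) (Fin l) ℂ) : Matrix (Fin k) (Fin l) ℝ :=
  Matrix.of fun i j => (X i j).re

/-- Imaginary part of a complex matrix. -/
def imM {k l : ℕ} (X : Matrix (Fin k) (Fin l) ℂ) : Matrix (Fin k) (Fin l) ℝ :=
  Matrix.of fun i j => (X i j).im

/-!
The CM condition `γ - iJ ≥ 0` is affine in `γ`, so CMs form a convex set and `γ̃` is a CM.
Conjugating by the block rotation `[[0, -1], [1, 0]]` preserves positive semidefiniteness, fixes
`[[A, C], [Cᵀ, A]]` because `Cᵀ = -C`, and swaps the blocks of `γ_A ⊕ γ_B`; averaging the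
hypothesis with its rotated copy gives `γ ≥ γ̃ ⊕ γ̃`.
-/

namespace Matrix

variable {m n R : Type*}

theorem fromBlocks_sub [Sub R] (A₁ : Matrix m m R) (B₁ : Matrix m n R) (C₁ : Matrix n m R)
    (D₁ : Matrix n n R) (A₂ : Matrix m m R) (B₂ : Matrix m n R) (C₂ : Matrix n m R)
    (D₂ : Matrix n n R) :
    fromBlocks A₁ B₁ C₁ D₁ - fromBlocks A₂ B₂ C₂ D₂ =
      fromBlocks (A₁ - A₂) (B₁ - B₂) (C₁ - C₂) (D₁ - D₂) := by
  ext (i | i) (j | j) <;> rfl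

variable [Fintype m] [Fintype n] [DecidableEq m] [DecidableEq n] [CommRing R] [StarRing R]

theorem fromBlocks_rotation_conj (P : Matrix m m R) (Q : Matrix m n R) (S : Matrix n m R)
    (T : Matrix n n R) :
    (fromBlocks 0 (-1) 1 0 : Matrix (n ⊕ m) (m ⊕ n) R) * fromBlocks P Q S T *
        (fromBlocks 0 (-1) 1 0 : Matrix (n ⊕ m) (m ⊕ n) R)ᴴ =
      fromBlocks T (-S) (-Q) P := by
  simp [fromBlocks_conjTranspose, fromBlocks_multiply]

theorem PosSemidef.fromBlocks_rotate [PartialOrder R] {P : Matrix m m R} {Q : Matrix m n R}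
    {S : Matrix n m R} {T : Matrix n n R} (h : (fromBlocks P Q S T).PosSemidef) :
    (fromBlocks T (-S) (-Q) P).PosSemidef :=
  fromBlocks_rotation_conj P Q S T ▸ h.mul_mul_conjTranspose_same _

end Matrix

theorem convex_setOf_isCM (n : ℕ) :
    Convex ℝ {γ : Matrix (Fin (2*n)) (Fin (2*n)) ℝ | IsCM γ} := by
  rintro x ⟨hx_symm, hx_psd⟩ y ⟨hy_symm, hy_psd⟩ a b ha hb hab
  refine ⟨(hx_symm.smul a).add (hy_symm.smul b), ?_⟩
  have hdecomp : toC (a • x + b • y) - Complex.I • toC (J n) =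
      a • (toC x - Complex.I • toC (J n)) + b • (toC y - Complex.I • toC (J n)) := by
    ext i j
    have hab' : (a : ℂ) + b = 1 := by exact_mod_cast hab
    simp only [toC, Matrix.sub_apply, map_apply, Matrix.add_apply, Matrix.smul_apply, smul_eq_mul,
      Complex.ofReal_add, Complex.ofReal_mul, Complex.real_smul]
    linear_combination Complex.I * (J n i j : ℂ) * hab'
  rw [hdecomp]
  exact (hx_psd.smul ha).add (hy_psd.smul hb)

theorem corollary1_general {n : ℕ} (A C γA γB : Matrix (Fin (2*n)) (Fin (2*n)) ℝ)
    (hC : Cᵀ = -C) (hγA : IsCM γA) (hγB : IsCM γB)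
    (hsep : (Matrix.fromBlocks A C Cᵀ A - Matrix.fromBlocks γA 0 0 γB).PosSemidef) :
    IsCM ((2 : ℝ)⁻¹ • (γA + γB)) ∧
    (Matrix.fromBlocks A C Cᵀ A -
      Matrix.fromBlocks ((2 : ℝ)⁻¹ • (γA + γB)) 0 0 ((2 : ℝ)⁻¹ • (γA + γB))).PosSemidef := by
  have hcm : IsCM ((2 : ℝ)⁻¹ • (γA + γB)) := by
    simpa only [smul_add, Set.mem_ofPred_eq] using
      convex_setOf_isCM n hγA hγB (by norm_num) (by norm_num) (by norm_num)
  refine ⟨hcm, ?_⟩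
  rw [fromBlocks_sub] at hsep ⊢
  simp only [sub_zero] at hsep ⊢
  have hmid : fromBlocks (A - (2 : ℝ)⁻¹ • (γA + γB)) C Cᵀ (A - (2 : ℝ)⁻¹ • (γA + γB)) =
      (2 : ℝ)⁻¹ •
        (fromBlocks (A - γA) C Cᵀ (A - γB) + fromBlocks (A - γB) (-Cᵀ) (-C) (A - γA)) := by
    rw [fromBlocks_add, fromBlocks_smul, hC]
    congr 1 <;> module
  rw [hmid]
  exact (hsep.add hsep.fromBlocks_rotate).smul (by norm_num)

/-- Corollary 1: for symmetric `γ = [[A,C],[Cᵀ,A]]` with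
`γ ≥ γ_A ⊕ γ_B`, also `γ ≥ γ̃ ⊕ γ̃` with `γ̃ = (γ_A + γ_B)/2` a CM. -/
theorem corollary1 {n : ℕ} (A C γA γB : Matrix (Fin (2*n)) (Fin (2*n)) ℝ)
    (hA : A.IsSymm) (hC : Cᵀ = -C) (hγA : IsCM γA) (hγB : IsCM γB)
    (hsep : (Matrix.fromBlocks A C Cᵀ A - Matrix.fromBlocks γA 0 0 γB).PosSemidef) :
    IsCM ((2 : ℝ)⁻¹ • (γA + γB)) ∧
    (Matrix.fromBlocks A C Cᵀ A -
      Matrix.fromBlocks ((2 : ℝ)⁻¹ • (γA + γB)) 0 0 ((2 : ℝ)⁻¹ • (γA + γB))).PosSemidef :=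
  corollary1_general A C γA γB hC hγA hγB hsep
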